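/- Let v = v^{γ,δ} with γ, δ ≥ 0, and suppose the Lagrange operators L_n satisfy ‖[f − L_n f]v‖_∞ ≤ C log n · E_n(f)_v for all f ∈ C^0_v. Then for all f ∈ B_r(v) with r > 0: ‖f − L_n f‖_{B_0(v)} ≤ C (log² n / n^r) ‖f‖_{B_r(v)}, with C independent of n and f. -/

import Mathlib

open MeasureTheory Polynomial

/-- Weighted sup norm `‖f v‖_∞` over `(-1,1)`. -/
noncomputable def wnorm (v f : ℝ → ℝ) : ℝ :=
  ⨆ x : Set.Ioo (-1 : ℝ) 1, |f x * v x|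

/-- Weighted error of best polynomial approximation
`E_n(f)_v = inf_{deg P ≤ n} ‖(f - P) v‖_∞`. -/
noncomputable def Err (v f : ℝ → ℝ) (n : ℕ) : ℝ :=
  ⨅ P : {P : Polynomial ℝ // P.natDegree ≤ n},
    wnorm v (fun x => f x - (P : Polynomial ℝ).eval x)

/-- Besov type norm `‖f‖_{B_r(v)} = ‖f v‖_∞ + ∑_{n≥1} (n+1)^{r-1} E_n(f)_v`
(for `r = 0` the weight is `1/(n+1)`). -/
noncomputable def BesovNorm (v f : ℝ → ℝ) (r : ℝ) : ℝ :=
  wnorm v f + ∑' k : ℕ, ((k : ℝ) + 2) ^ (r - 1) * Err v f (k + 1)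

/-- Membership in the Besov type space `B_r(v)`: summability of the weighted
best approximation errors. -/
def MemB (v f : ℝ → ℝ) (r : ℝ) : Prop :=
  Summable fun k : ℕ => ((k : ℝ) + 2) ^ (r - 1) * Err v f (k + 1)

/-- Membership in `C^0_v` for the Jacobi weight `v = v^{γ,δ}`: `f v` extends
continuously to `[-1,1]` and vanishes at the endpoints where the weight does. -/
def MemC0 (γ δ : ℝ) (f : ℝ → ℝ) : Prop :=
  ∃ g : ℝ → ℝ, ContinuousOn g (Set.Icc (-1 : ℝ) 1) ∧
    (∀ x ∈ Set.Ioo (-1 : ℝ) 1, g x = f x * ((1 - x) ^ γ * (1 + x) ^ δ)) ∧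
    (0 < γ → g 1 = 0) ∧ (0 < δ → g (-1) = 0)

section Aux

instance instNePoly (n : ℕ) : Nonempty {P : Polynomial ℝ // P.natDegree ≤ n} :=
  ⟨⟨0, by simp⟩⟩

theorem wnorm_nonneg' (v f : ℝ → ℝ) : 0 ≤ wnorm v f :=
  Real.iSup_nonneg fun _ => abs_nonneg _

theorem errBddBelow (v f : ℝ → ℝ) (n : ℕ) :
    BddBelow (Set.range fun P : {P : Polynomial ℝ // P.natDegree ≤ n} =>
      wnorm v (fun x => f x - (P : Polynomial ℝ).eval x)) := by
  refine ⟨0, ?_⟩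
  rintro y ⟨P, rfl⟩
  exact wnorm_nonneg' _ _

theorem Err_nonneg' (v f : ℝ → ℝ) (n : ℕ) : 0 ≤ Err v f n :=
  le_ciInf fun _ => wnorm_nonneg' _ _

theorem Err_le_wnorm' (v f : ℝ → ℝ) (n : ℕ) : Err v f n ≤ wnorm v f := by
  have h := ciInf_le (errBddBelow v f n) (⟨0, by simp⟩ : {P : Polynomial ℝ // P.natDegree ≤ n})
  simpa [Err] using h

theorem Err_anti (v f : ℝ → ℝ) {m n : ℕ} (h : m ≤ n) : Err v f n ≤ Err v f m :=
  le_ciInf fun P => ciInf_le (errBddBelow v f n)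
    (⟨(P : Polynomial ℝ), le_trans P.2 h⟩ : {Q : Polynomial ℝ // Q.natDegree ≤ n})

theorem Err_sub_le' (v f g : ℝ → ℝ) (Q : Polynomial ℝ) (hQ : ∀ x, g x = Q.eval x)
    {k : ℕ} (hQd : Q.natDegree ≤ k) :
    Err v (fun x => f x - g x) k ≤ Err v f k := by
  refine le_ciInf fun P => ?_
  have hdeg : (↑P - Q).natDegree ≤ k :=
    le_trans (Polynomial.natDegree_sub_le _ _) (max_le P.2 hQd)
  have h := ciInf_le (errBddBelow v (fun x => f x - g x) k)
    (⟨(P : Polynomial ℝ) - Q, hdeg⟩ : {R : Polynomial ℝ // R.natDegree ≤ k})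
  refine le_trans h (le_of_eq ?_)
  congr 1
  funext x
  simp only [Polynomial.eval_sub, hQ x]
  ring

theorem harmonic_sum_le (m : ℕ) :
    ∑ k ∈ Finset.range m, ((k : ℝ) + 2)⁻¹ ≤ Real.log ((m : ℝ) + 1) := by
  have h := harmonic_le_one_add_log (m + 1)
  have hc : (harmonic (m + 1) : ℝ) = ∑ i ∈ Finset.range (m + 1), ((i : ℝ) + 1)⁻¹ := by
    rw [harmonic]
    push_cast
    ring
  rw [Finset.sum_range_succ'] at hc
  have : ((m : ℝ) + 1) = ((m + 1 : ℕ) : ℝ) := by push_cast; ring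
  rw [this]
  have hsum : ∑ k ∈ Finset.range m, ((k : ℝ) + 2)⁻¹
      = ∑ i ∈ Finset.range m, (((i : ℕ) + 1 : ℝ) + 1)⁻¹ := by
    refine Finset.sum_congr rfl fun i _ => ?_
    push_cast
    ring_nf
  rw [hsum]
  have := hc ▸ h
  push_cast at this ⊢
  linarith

set_option maxHeartbeats 1000000 in
/-- Jackson-type estimate: `n^r * E_n(f) ≤ D * ∑' a`. -/
theorem jackson (v f : ℝ → ℝ) (r : ℝ) (hr : 0 < r)
    (hs : Summable fun k : ℕ => ((k : ℝ) + 2) ^ (r - 1) * Err v f (k + 1))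
    (n : ℕ) (hn : 2 ≤ n) :
    (n : ℝ) ^ r * Err v f n
      ≤ (2 * (2 : ℝ) ^ |r - 1|) * ∑' k : ℕ, ((k : ℝ) + 2) ^ (r - 1) * Err v f (k + 1) := by
  set a : ℕ → ℝ := fun k => ((k : ℝ) + 2) ^ (r - 1) * Err v f (k + 1) with ha
  set E := Err v f n with hE
  have hE0 : 0 ≤ E := Err_nonneg' v f n
  have hn0 : (0 : ℝ) < n := by positivity
  have hs2 : (0 : ℝ) < (2 : ℝ) ^ |r - 1| := Real.rpow_pos_of_pos two_pos _
  -- each term on the block is at least n^{r-1} * (2^{|r-1|})⁻¹ * E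
  have key : ∀ k ∈ Finset.Ico (n / 2) n,
      (n : ℝ) ^ (r - 1) * ((2 : ℝ) ^ |r - 1|)⁻¹ * E ≤ a k := by
    intro k hk
    rw [Finset.mem_Ico] at hk
    have hk1 : n / 2 ≤ k := hk.1
    have hk2 : k < n := hk.2
    have hlow : (n : ℝ) / 2 ≤ (k : ℝ) + 2 := by
      have : n ≤ 2 * k + 4 := by omega
      have := (Nat.cast_le (α := ℝ)).2 this
      push_cast at this
      linarith
    have hhigh : (k : ℝ) + 2 ≤ 2 * (n : ℝ) := by
      have : k + 2 ≤ 2 * n := by omega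
      have := (Nat.cast_le (α := ℝ)).2 this
      push_cast at this
      linarith
    have hErr : E ≤ Err v f (k + 1) := Err_anti v f (by omega)
    have hpow : (n : ℝ) ^ (r - 1) * ((2 : ℝ) ^ |r - 1|)⁻¹ ≤ ((k : ℝ) + 2) ^ (r - 1) := by
      rcases le_or_gt 1 r with hr1 | hr1
      · have habs : |r - 1| = r - 1 := abs_of_nonneg (by linarith)
        have h1 : ((n : ℝ) / 2) ^ (r - 1) ≤ ((k : ℝ) + 2) ^ (r - 1) :=
          Real.rpow_le_rpow (by positivity) hlow (by linarith)
        have h2 : ((n : ℝ) / 2) ^ (r - 1) = (n : ℝ) ^ (r - 1) / (2 : ℝ) ^ (r - 1) :=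
          Real.div_rpow (by positivity) (by norm_num) _
        rw [habs]
        rw [h2] at h1
        rw [div_eq_mul_inv] at h1
        exact h1
      · have habs : |r - 1| = -(r - 1) := abs_of_neg (by linarith)
        have h1 : (2 * (n : ℝ)) ^ (r - 1) ≤ ((k : ℝ) + 2) ^ (r - 1) :=
          Real.rpow_le_rpow_of_nonpos (by positivity) hhigh (by linarith)
        have h2 : (2 * (n : ℝ)) ^ (r - 1) = (2 : ℝ) ^ (r - 1) * (n : ℝ) ^ (r - 1) :=
          Real.mul_rpow (by norm_num) (by positivity)
        have h3 : (2 : ℝ) ^ (r - 1) = ((2 : ℝ) ^ |r - 1|)⁻¹ := by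
          rw [habs, ← Real.rpow_neg (by norm_num : (0:ℝ) ≤ 2), neg_neg]
        rw [h2, h3] at h1
        linarith [h1]
    calc (n : ℝ) ^ (r - 1) * ((2 : ℝ) ^ |r - 1|)⁻¹ * E
        ≤ ((k : ℝ) + 2) ^ (r - 1) * E :=
          mul_le_mul_of_nonneg_right hpow hE0
      _ ≤ ((k : ℝ) + 2) ^ (r - 1) * Err v f (k + 1) :=
          mul_le_mul_of_nonneg_left hErr (by positivity)
  have hcard : (Finset.Ico (n / 2) n).card = n - n / 2 := Nat.card_Ico _ _
  have hcardR : (n : ℝ) / 2 ≤ ((Finset.Ico (n / 2) n).card : ℝ) := by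
    rw [hcard]
    have h1 : n ≤ 2 * (n - n / 2) := by omega
    have := (Nat.cast_le (α := ℝ)).2 h1
    push_cast at this
    linarith
  have hsumlow : ((Finset.Ico (n / 2) n).card : ℝ)
      * ((n : ℝ) ^ (r - 1) * ((2 : ℝ) ^ |r - 1|)⁻¹ * E)
      ≤ ∑ k ∈ Finset.Ico (n / 2) n, a k := by
    have := Finset.card_nsmul_le_sum (Finset.Ico (n / 2) n) a
      ((n : ℝ) ^ (r - 1) * ((2 : ℝ) ^ |r - 1|)⁻¹ * E) key
    simpa [nsmul_eq_mul] using this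
  have hann : ∀ k : ℕ, 0 ≤ a k := fun k =>
    mul_nonneg (Real.rpow_nonneg (by positivity) _) (Err_nonneg' v f _)
  have hsumT : ∑ k ∈ Finset.Ico (n / 2) n, a k ≤ ∑' k, a k :=
    Summable.sum_le_tsum _ (fun k _ => hann k) hs
  have hterm0 : 0 ≤ (n : ℝ) ^ (r - 1) * ((2 : ℝ) ^ |r - 1|)⁻¹ * E := by positivity
  have hmain : (n : ℝ) / 2 * ((n : ℝ) ^ (r - 1) * ((2 : ℝ) ^ |r - 1|)⁻¹ * E)
      ≤ ∑' k, a k :=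
    le_trans (le_trans (mul_le_mul_of_nonneg_right hcardR hterm0) hsumlow) hsumT
  have hrn : (n : ℝ) ^ r = (n : ℝ) ^ (r - 1) * (n : ℝ) := by
    rw [show r = r - 1 + 1 by ring, Real.rpow_add_one hn0.ne']
    ring_nf
  have hstep := mul_le_mul_of_nonneg_left hmain
    (by positivity : (0 : ℝ) ≤ 2 * (2 : ℝ) ^ |r - 1|)
  calc (n : ℝ) ^ r * E = 2 * (2 : ℝ) ^ |r - 1| *
        ((n : ℝ) / 2 * ((n : ℝ) ^ (r - 1) * ((2 : ℝ) ^ |r - 1|)⁻¹ * E)) := by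
        rw [hrn]; field_simp
    _ ≤ (2 * (2 : ℝ) ^ |r - 1|) * ∑' k, a k := hstep

end Aux
set_option maxHeartbeats 1000000 in
/-- Estimate (Lag_map1) of Theorem 3.3: if the Lagrange operators satisfy
`‖(f - L_n f) v‖_∞ ≤ C log n · E_n(f)_v` and map into polynomials of degree `< n`,
then for `f ∈ B_r(v)`, `r > 0`:
`‖f - L_n f‖_{B_0(v)} ≤ C (log² n / n^r) ‖f‖_{B_r(v)}`. -/
theorem stmt18 (γ δ r : ℝ) (hγ : 0 ≤ γ) (hδ : 0 ≤ δ) (hr : 0 < r) (v : ℝ → ℝ)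
    (hv : ∀ x ∈ Set.Ioo (-1 : ℝ) 1, v x = (1 - x) ^ γ * (1 + x) ^ δ)
    (L : ℕ → (ℝ → ℝ) → ℝ → ℝ) (C : ℝ)
    (hpoly : ∀ (n : ℕ) (f : ℝ → ℝ), ∃ P : Polynomial ℝ,
      P.natDegree ≤ n - 1 ∧ ∀ x, L n f x = P.eval x)
    (hL : ∀ (n : ℕ) (f : ℝ → ℝ), 2 ≤ n → MemC0 γ δ f →
      wnorm v (fun x => f x - L n f x) ≤ C * Real.log n * Err v f n) :
    ∃ C' : ℝ, 0 < C' ∧ ∀ f : ℝ → ℝ, MemC0 γ δ f → MemB v f r →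
      ∀ n : ℕ, 2 ≤ n →
        BesovNorm v (fun x => f x - L n f x) 0 ≤
          C' * ((Real.log n) ^ 2 / (n : ℝ) ^ r) * BesovNorm v f r := by
  set B := |C| with hBdef
  set D := 2 * (2 : ℝ) ^ |r - 1| with hDdef
  have hD0 : 0 < D := by positivity
  have hB0 : 0 ≤ B := abs_nonneg C
  set l2 := Real.log 2 with hl2def
  have hl2 : 0 < l2 := Real.log_pos one_lt_two
  refine ⟨B * D * (1 + l2⁻¹) + (l2⁻¹) ^ 2, by positivity, ?_⟩
  intro f hf hBf n hn
  set g : ℝ → ℝ := fun x => f x - L n f x with hgdef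
  set m : ℕ := n - 1 with hmdef
  have hm : m + 1 = n := by omega
  set a : ℕ → ℝ := fun k => ((k : ℝ) + 2) ^ (r - 1) * Err v f (k + 1) with hadef
  have hann : ∀ k : ℕ, 0 ≤ a k := fun k =>
    mul_nonneg (Real.rpow_nonneg (by positivity) _) (Err_nonneg' v f _)
  set T := ∑' k, a k with hTdef
  have hT0 : 0 ≤ T := tsum_nonneg hann
  have hTF : T ≤ BesovNorm v f r := by
    have := wnorm_nonneg' v f
    rw [BesovNorm]
    linarith
  have hF0 : 0 ≤ BesovNorm v f r := le_trans hT0 hTF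
  set Ln := Real.log n with hLndef
  have hLn2 : l2 ≤ Ln := Real.log_le_log (by norm_num) (by exact_mod_cast hn)
  have hLn0 : 0 < Ln := lt_of_lt_of_le hl2 hLn2
  set E := Err v f n with hEdef
  have hE0 : 0 ≤ E := Err_nonneg' v f n
  have hnr : (0 : ℝ) < (n : ℝ) ^ r := Real.rpow_pos_of_pos (by positivity) r
  set W := wnorm v g with hWdef
  have hW0 : 0 ≤ W := wnorm_nonneg' v g
  have hW : W ≤ B * Ln * E := by
    have h1 := hL n f hn hf
    have h2 : C * Ln * E ≤ B * Ln * E := by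
      apply mul_le_mul_of_nonneg_right _ hE0
      exact mul_le_mul_of_nonneg_right (le_abs_self C) hLn0.le
    exact le_trans h1 (le_trans (le_of_eq rfl) h2)
  have hEn : (n : ℝ) ^ r * E ≤ D * T := jackson v f r hr hBf n hn
  -- the polynomial representing L n f
  obtain ⟨Q, hQd, hQ⟩ := hpoly n f
  -- termwise bound
  set b : ℕ → ℝ := fun k => if k < m then ((k : ℝ) + 2)⁻¹ * W
    else ((k : ℝ) + 2) ^ (r - 1) * (((n : ℝ) ^ r)⁻¹) * Err v f (k + 1) with hbdef
  set tg : ℕ → ℝ := fun k => ((k : ℝ) + 2)⁻¹ * Err v g (k + 1) with htgdef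
  have htgnn : ∀ k, 0 ≤ tg k := fun k =>
    mul_nonneg (by positivity) (Err_nonneg' v g _)
  have hle : ∀ k, tg k ≤ b k := by
    intro k
    by_cases hk : k < m
    · rw [hbdef]
      simp only [if_pos hk]
      exact mul_le_mul_of_nonneg_left (Err_le_wnorm' v g _) (by positivity)
    · rw [hbdef]
      simp only [if_neg hk]
      push_neg at hk
      have hErr : Err v g (k + 1) ≤ Err v f (k + 1) :=
        Err_sub_le' v f (L n f) Q hQ (le_trans hQd (by omega))
      have hfac : ((k : ℝ) + 2)⁻¹ ≤ ((k : ℝ) + 2) ^ (r - 1) * ((n : ℝ) ^ r)⁻¹ := by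
        have hk2 : (n : ℝ) ≤ (k : ℝ) + 2 := by
          have : n ≤ k + 2 := by omega
          exact_mod_cast this
        have hkpos : (0 : ℝ) < (k : ℝ) + 2 := by positivity
        have h1 : ((k : ℝ) + 2) ^ (-r) ≤ ((n : ℝ) ^ r)⁻¹ := by
          rw [← Real.rpow_neg (by positivity : (0:ℝ) ≤ (n:ℝ))]
          exact Real.rpow_le_rpow_of_nonpos (by positivity) hk2 (by linarith)
        have h2 : ((k : ℝ) + 2)⁻¹ = ((k : ℝ) + 2) ^ (r - 1) * ((k : ℝ) + 2) ^ (-r) := by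
          rw [← Real.rpow_add hkpos, show r - 1 + -r = -1 by ring, Real.rpow_neg_one]
        rw [h2]
        exact mul_le_mul_of_nonneg_left h1 (by positivity)
      calc ((k : ℝ) + 2)⁻¹ * Err v g (k + 1)
          ≤ ((k : ℝ) + 2)⁻¹ * Err v f (k + 1) :=
            mul_le_mul_of_nonneg_left hErr (by positivity)
        _ ≤ ((k : ℝ) + 2) ^ (r - 1) * ((n : ℝ) ^ r)⁻¹ * Err v f (k + 1) :=
            mul_le_mul_of_nonneg_right hfac (Err_nonneg' v f _)
  -- summability of b
  have hbshift : Summable fun j : ℕ => b (j + m) := by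
    have h1 : Summable fun j : ℕ => a (j + m) := (summable_nat_add_iff m).mpr hBf
    have h2 : Summable fun j : ℕ => a (j + m) * ((n : ℝ) ^ r)⁻¹ := h1.mul_right _
    refine h2.congr fun j => ?_
    rw [hbdef]
    simp only [if_neg (by omega : ¬ j + m < m)]
    rw [hadef]
    push_cast
    ring
  have hbsum : Summable b := (summable_nat_add_iff m).mp hbshift
  have hgsum : Summable tg := Summable.of_nonneg_of_le htgnn hle hbsum
  -- tsum estimates
  have htsum1 : ∑' k, tg k ≤ ∑' k, b k := Summable.tsum_le_tsum hle hgsum hbsum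
  have hsplit : ∑ k ∈ Finset.range m, b k + ∑' j, b (j + m) = ∑' k, b k :=
    Summable.sum_add_tsum_nat_add m hbsum
  have hhead : ∑ k ∈ Finset.range m, b k ≤ Ln * W := by
    have h1 : ∑ k ∈ Finset.range m, b k
        = (∑ k ∈ Finset.range m, ((k : ℝ) + 2)⁻¹) * W := by
      rw [Finset.sum_mul]
      refine Finset.sum_congr rfl fun k hk => ?_
      rw [Finset.mem_range] at hk
      rw [hbdef]
      simp [if_pos hk]
    rw [h1]
    have h2 : ∑ k ∈ Finset.range m, ((k : ℝ) + 2)⁻¹ ≤ Real.log ((m : ℝ) + 1) :=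
      harmonic_sum_le m
    have h3 : ((m : ℝ) + 1) = (n : ℝ) := by
      rw [← hm]; push_cast; ring
    rw [h3] at h2
    exact mul_le_mul_of_nonneg_right h2 hW0
  have htail : ∑' j, b (j + m) ≤ T * ((n : ℝ) ^ r)⁻¹ := by
    have h1 : ∀ j : ℕ, b (j + m) = a (j + m) * ((n : ℝ) ^ r)⁻¹ := by
      intro j
      rw [hbdef]
      simp only [if_neg (by omega : ¬ j + m < m)]
      rw [hadef]
      push_cast
      ring
    have h2 : ∑' j, b (j + m) = (∑' j, a (j + m)) * ((n : ℝ) ^ r)⁻¹ := by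
      rw [← tsum_mul_right]
      exact tsum_congr h1
    rw [h2]
    have h3 : ∑' j, a (j + m) ≤ T := by
      have h4 := Summable.sum_add_tsum_nat_add (f := a) m hBf
      have h5 : 0 ≤ ∑ k ∈ Finset.range m, a k :=
        Finset.sum_nonneg fun k _ => hann k
      rw [hTdef]
      linarith
    exact mul_le_mul_of_nonneg_right h3 (by positivity)
  -- Besov norm of g
  have hBes : BesovNorm v g 0 ≤ W + (Ln * W + T * ((n : ℝ) ^ r)⁻¹) := by
    rw [BesovNorm]
    have heq : (fun k : ℕ => ((k : ℝ) + 2) ^ ((0 : ℝ) - 1) * Err v g (k + 1)) = tg := by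
      funext k
      rw [htgdef, zero_sub, Real.rpow_neg_one]
    rw [heq]
    have : ∑' k, tg k ≤ Ln * W + T * ((n : ℝ) ^ r)⁻¹ := by
      calc ∑' k, tg k ≤ ∑' k, b k := htsum1
        _ = ∑ k ∈ Finset.range m, b k + ∑' j, b (j + m) := hsplit.symm
        _ ≤ Ln * W + T * ((n : ℝ) ^ r)⁻¹ := add_le_add hhead htail
    linarith
  -- combine
  have h3 : (n : ℝ) ^ r * W ≤ B * Ln * (D * T) := by
    calc (n : ℝ) ^ r * W ≤ (n : ℝ) ^ r * (B * Ln * E) :=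
          mul_le_mul_of_nonneg_left hW hnr.le
      _ = B * Ln * ((n : ℝ) ^ r * E) := by ring
      _ ≤ B * Ln * (D * T) :=
          mul_le_mul_of_nonneg_left hEn (by positivity)
  have h4 : Ln * ((n : ℝ) ^ r * W) ≤ Ln * (B * Ln * (D * T)) :=
    mul_le_mul_of_nonneg_left h3 hLn0.le
  have h1' : (n : ℝ) ^ r * BesovNorm v g 0
      ≤ (n : ℝ) ^ r * W + Ln * ((n : ℝ) ^ r * W) + T := by
    have h1 := mul_le_mul_of_nonneg_left hBes hnr.le
    have h2 : (n : ℝ) ^ r * (W + (Ln * W + T * ((n : ℝ) ^ r)⁻¹))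
        = (n : ℝ) ^ r * W + Ln * ((n : ℝ) ^ r * W) + T := by
      field_simp
      ring
    linarith [h1, h2.symm.le]
  have hkey : (n : ℝ) ^ r * BesovNorm v g 0 ≤ (B * D * (Ln + Ln ^ 2) + 1) * T := by
    have hid : (B * D * (Ln + Ln ^ 2) + 1) * T
        = B * Ln * (D * T) + Ln * (B * Ln * (D * T)) + T := by ring
    linarith [h1', h3, h4, hid]
  -- coefficient comparison
  have hcoef : B * D * (Ln + Ln ^ 2) + 1 ≤ (B * D * (1 + l2⁻¹) + (l2⁻¹) ^ 2) * Ln ^ 2 := by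
    have h5 : Ln ≤ l2⁻¹ * Ln ^ 2 := by
      have : l2 * Ln ≤ Ln * Ln := mul_le_mul_of_nonneg_right hLn2 hLn0.le
      have h6 : Ln = l2⁻¹ * (l2 * Ln) := by field_simp
      calc Ln = l2⁻¹ * (l2 * Ln) := h6
        _ ≤ l2⁻¹ * (Ln * Ln) := mul_le_mul_of_nonneg_left this (by positivity)
        _ = l2⁻¹ * Ln ^ 2 := by ring
    have h7 : 1 ≤ (l2⁻¹) ^ 2 * Ln ^ 2 := by
      have : 1 ≤ l2⁻¹ * Ln := by
        rw [inv_mul_eq_div, le_div_iff₀ hl2]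
        linarith
      nlinarith [this]
    have h8 : B * D * Ln ≤ B * D * (l2⁻¹ * Ln ^ 2) :=
      mul_le_mul_of_nonneg_left h5 (by positivity)
    have hid2 : (B * D * (1 + l2⁻¹) + (l2⁻¹) ^ 2) * Ln ^ 2
        = B * D * Ln ^ 2 + B * D * (l2⁻¹ * Ln ^ 2) + (l2⁻¹) ^ 2 * Ln ^ 2 := by ring
    linarith [h7, h8, hid2]
  have hfinal : (B * D * (Ln + Ln ^ 2) + 1) * T
      ≤ ((B * D * (1 + l2⁻¹) + (l2⁻¹) ^ 2) * Ln ^ 2) * BesovNorm v f r := by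
    apply mul_le_mul hcoef hTF hT0
    positivity
  -- conclude
  have hgoal : (B * D * (1 + l2⁻¹) + (l2⁻¹) ^ 2) * (Ln ^ 2 / (n : ℝ) ^ r) * BesovNorm v f r
      = ((B * D * (1 + l2⁻¹) + (l2⁻¹) ^ 2) * Ln ^ 2 * BesovNorm v f r) / (n : ℝ) ^ r := by
    ring
  rw [hgoal, le_div_iff₀ hnr]
  calc BesovNorm v g 0 * (n : ℝ) ^ r = (n : ℝ) ^ r * BesovNorm v g 0 := by ring
    _ ≤ (B * D * (Ln + Ln ^ 2) + 1) * T := hkey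
    _ ≤ (B * D * (1 + l2⁻¹) + (l2⁻¹) ^ 2) * Ln ^ 2 * BesovNorm v f r := hfinal
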